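/- arXiv:1502.04578 — 2 statements merged into one kernel-verified Lean document; each statement's English description precedes it below -/
import Mathlib

section
/- For every natural number d ≥ 1, there exists a vector sequence of dimension d (a function f : ℕ → ℕ^d) which is not an asymptotic mix of any vector sequence of dimension d−1. -/
def BddOnP {I : Type*} (f : I → ℕ) (S : Set I) : Prop := ∃ B, ∀ i ∈ S, f i ≤ B

def AsympEquiv {I : Type*} (f g : I → ℕ) : Prop := ∀ S : Set I, BddOnP f S ↔ BddOnP g S

def MemVS {I : Type*} {d : ℕ} (f : I → ℕ) (F : I → Fin d → ℕ) : Prop := ∀ i, ∃ j, f i = F i j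

def IsMix {I : Type*} {d e : ℕ} (F : I → Fin d → ℕ) (G : I → Fin e → ℕ) : Prop :=
  ∀ f : I → ℕ, MemVS f F → ∃ g : I → ℕ, MemVS g G ∧ AsympEquiv f g

lemma transfer {I : Type*} {f g : I → ℕ} (h : ∀ S : Set I, BddOnP f S → BddOnP g S)
    (B : ℕ) : ∃ M, ∀ i, f i ≤ B → g i ≤ M := by
  obtain ⟨M, hM⟩ := h {i | f i ≤ B} ⟨B, fun i hi => hi⟩
  exact ⟨M, fun i hi => hM i hi⟩

theorem stmt_0 (d : ℕ) (hd : 1 ≤ d) :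
    ∃ F : ℕ → Fin d → ℕ, ∀ G : ℕ → Fin (d - 1) → ℕ, ¬ IsMix F G := by
  obtain ⟨e, he⟩ := exists_surjective_nat (Fin d → ℕ)
  refine ⟨e, fun G hmix => ?_⟩
  have hg : ∀ r : Fin d, ∃ g : ℕ → ℕ, MemVS g G ∧ AsympEquiv (fun i => e i r) g :=
    fun r => hmix _ (fun i => ⟨r, rfl⟩)
  choose g hgmem hgeq using hg
  have hC : ∀ r : Fin d, ∀ B : ℕ, ∃ M, ∀ i, e i r ≤ B → g r i ≤ M :=
    fun r B => transfer (fun S hS => (hgeq r S).mp hS) B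
  have hM : ∀ r : Fin d, ∀ B : ℕ, ∃ M, ∀ i, g r i ≤ B → e i r ≤ M :=
    fun r B => transfer (fun S hS => (hgeq r S).mpr hS) B
  choose C hC using hC
  choose M hM using hM
  -- recursively defined bounds b and tuple v
  set b : ℕ → ℕ := fun k => Nat.rec
      (dite (0 < d) (fun h => C ⟨0, h⟩ 0) (fun _ => 0))
      (fun k bk => max bk (dite (k + 1 < d)
        (fun h => C ⟨k + 1, h⟩ (M ⟨k + 1, h⟩ bk + 1)) (fun _ => 0))) k with hbdef
  have hb0 : b 0 = dite (0 < d) (fun h => C ⟨0, h⟩ 0) (fun _ => 0) := rfl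
  have hbs : ∀ k, b (k + 1) = max (b k) (dite (k + 1 < d)
      (fun h => C ⟨k + 1, h⟩ (M ⟨k + 1, h⟩ (b k) + 1)) (fun _ => 0)) := fun k => rfl
  set v : ℕ → ℕ := fun k => Nat.casesOn k 0
      (fun k => dite (k + 1 < d) (fun h => M ⟨k + 1, h⟩ (b k) + 1) (fun _ => 0)) with hvdef
  have hv0 : v 0 = 0 := rfl
  have hvs : ∀ k (h : k + 1 < d), v (k + 1) = M ⟨k + 1, h⟩ (b k) + 1 := by
    intro k h; simp only [hvdef, dif_pos h]
  -- a position realizing the tuple v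
  obtain ⟨i, hi⟩ := he (fun j : Fin d => v j.val)
  have hei : ∀ r : Fin d, e i r = v r.val := fun r => congrFun hi r
  -- upper bounds
  have hub : ∀ k (h : k < d), g ⟨k, h⟩ i ≤ b k := by
    intro k h
    cases k with
    | zero =>
        have := hC ⟨0, h⟩ 0 i (by rw [hei ⟨0, h⟩]; exact le_of_eq hv0)
        rw [hb0, dif_pos h]; exact this
    | succ k =>
        have h1 : e i ⟨k + 1, h⟩ ≤ M ⟨k + 1, h⟩ (b k) + 1 := by
          rw [hei ⟨k + 1, h⟩, hvs k h]
        have := hC ⟨k + 1, h⟩ (M ⟨k + 1, h⟩ (b k) + 1) i h1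
        rw [hbs k, dif_pos h]
        exact le_trans this (le_max_right _ _)
  -- lower bounds
  have hlb : ∀ k (h : k + 1 < d), b k < g ⟨k + 1, h⟩ i := by
    intro k h
    by_contra hle
    push_neg at hle
    have := hM ⟨k + 1, h⟩ (b k) i hle
    rw [hei ⟨k + 1, h⟩, hvs k h] at this
    omega
  -- monotonicity of b
  have hmono : ∀ k l, k ≤ l → b k ≤ b l := by
    intro k l hkl
    induction l with
    | zero => rw [Nat.le_zero.mp hkl]
    | succ l ih =>
        rcases Nat.eq_or_lt_of_le hkl with h | h
        · exact le_of_eq (by rw [h])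
        · exact le_trans (ih (by omega)) (by rw [hbs l]; exact le_max_left _ _)
  -- the values g r i are strictly increasing in r, hence injective
  have hinj : Function.Injective (fun r : Fin d => g r i) := by
    have hlt : ∀ r s : Fin d, (r : ℕ) < s → g r i < g s i := by
      intro r s hrs
      obtain ⟨t, ht⟩ : ∃ t, (s : ℕ) = t + 1 := ⟨(s : ℕ) - 1, by omega⟩
      have hsd : (s : ℕ) < d := s.isLt
      have h1 : t + 1 < d := by omega
      have hs : (⟨t + 1, h1⟩ : Fin d) = s := by ext; simp only [Fin.val_mk]; omega
      calc g r i ≤ b r := hub r r.isLt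
        _ ≤ b t := hmono _ _ (by omega)
        _ < g ⟨t + 1, h1⟩ i := hlb t h1
        _ = g s i := by rw [hs]
    intro r s hrs
    rcases lt_trichotomy (r : ℕ) (s : ℕ) with h | h | h
    · exact absurd hrs (Nat.ne_of_lt (hlt r s h))
    · exact Fin.ext h
    · exact absurd hrs.symm (Nat.ne_of_lt (hlt s r h))
  -- each g r i is one of the d-1 values G i j : pigeonhole
  have hsel : ∀ r : Fin d, ∃ j : Fin (d - 1), g r i = G i j := fun r => hgmem r i
  choose j hj using hsel
  have hjinj : Function.Injective j := by
    intro r s hrs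
    exact hinj (by simp only [hj r, hj s, hrs])
  have := Fintype.card_le_of_injective j hjinj
  simp only [Fintype.card_fin] at this
  omega
end

section
/- The d-dimensional identity function id : ℕ^d → ℕ^d, viewed as a vector sequence indexed by ℕ^d, is not an asymptotic mix of any vector sequence 𝐠 : ℕ^d → ℕ^(d−1), for every d ≥ 1. -/
/-- auxiliary recursion producing (threshold, bound) pairs -/
def auxTB {α : Type*} (idx : ℕ → α) (Bd Md : α → ℕ → ℕ) : ℕ → ℕ × ℕ
  | 0 => (0, Bd (idx 0) 0)
  | k + 1 =>
    let p := auxTB idx Bd Md k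
    let t := Md (idx (k + 1)) p.2 + 1
    (t, max p.2 (Bd (idx (k + 1)) t))

theorem stmt_1 (d : ℕ) (hd : 1 ≤ d) (G : (Fin d → ℕ) → Fin (d - 1) → ℕ) :
    ¬ IsMix (fun v : Fin d → ℕ => v) G := by
  intro hmix
  have hg : ∀ j : Fin d, ∃ g : (Fin d → ℕ) → ℕ,
      MemVS g G ∧ AsympEquiv (fun v => v j) g :=
    fun j => hmix (fun v => v j) (fun i => ⟨j, rfl⟩)
  choose g hgmem hgeq using hg
  -- g j is bounded where coordinate j is bounded
  have hB : ∀ (j : Fin d) (m : ℕ), ∃ B, ∀ x : Fin d → ℕ, x j ≤ m → g j x ≤ B := by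
    intro j m
    have h1 : BddOnP (fun v : Fin d → ℕ => v j) {x | x j ≤ m} := ⟨m, fun i hi => hi⟩
    obtain ⟨B, hB⟩ := (hgeq j _).mp h1
    exact ⟨B, fun x hx => hB x hx⟩
  -- coordinate j is bounded where g j is bounded
  have hM : ∀ (j : Fin d) (N : ℕ), ∃ M, ∀ x : Fin d → ℕ, g j x ≤ N → x j ≤ M := by
    intro j N
    have h1 : BddOnP (g j) {x | g j x ≤ N} := ⟨N, fun i hi => hi⟩
    obtain ⟨M, hM⟩ := (hgeq j _).mpr h1
    exact ⟨M, fun x hx => hM x hx⟩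
  choose Bd hBd using hB
  choose Md hMd using hM
  have hd0 : 0 < d := hd
  set idx : ℕ → Fin d := fun k => ⟨k % d, Nat.mod_lt _ hd0⟩ with hidx
  set t : ℕ → ℕ := fun k => (auxTB idx Bd Md k).1 with ht
  set b : ℕ → ℕ := fun k => (auxTB idx Bd Md k).2 with hb
  have bmono : Monotone b := by
    apply monotone_nat_of_le_succ
    intro k
    simp only [hb, auxTB]
    exact le_max_left _ _
  have key1 : ∀ k, Bd (idx k) (t k) ≤ b k := by
    intro k
    cases k with
    | zero => simp [ht, hb, auxTB]
    | succ m => simp only [ht, hb, auxTB]; exact le_max_right _ _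
  have key2 : ∀ k, Md (idx (k + 1)) (b k) < t (k + 1) := by
    intro k
    simp only [ht, hb, auxTB]
    omega
  set x : Fin d → ℕ := fun j => t j.val with hx
  have hxj : ∀ j : Fin d, x (idx j.val) = t j.val := by
    intro j
    have : idx j.val = j := by
      apply Fin.ext
      simp [hidx, Nat.mod_eq_of_lt j.isLt]
    rw [this]
  have hidxj : ∀ j : Fin d, idx j.val = j := by
    intro j
    apply Fin.ext
    simp [hidx, Nat.mod_eq_of_lt j.isLt]
  -- upper bound: g j x ≤ b j.val
  have hub : ∀ j : Fin d, g j x ≤ b j.val := by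
    intro j
    have h1 : x j ≤ t j.val := le_of_eq rfl
    have h2 := hBd j (t j.val) x h1
    calc g j x ≤ Bd j (t j.val) := h2
      _ = Bd (idx j.val) (t j.val) := by rw [hidxj j]
      _ ≤ b j.val := key1 j.val
  -- lower bound: for j with j.val = k+1, g j x > b k
  have hlb : ∀ (k : ℕ) (j : Fin d), j.val = k + 1 → b k < g j x := by
    intro k j hjk
    by_contra hle
    push_neg at hle
    have h1 : t j.val ≤ Md j (b k) := hMd j (b k) x hle
    rw [hjk] at h1
    have hij : idx (k + 1) = j := by rw [← hjk]; exact hidxj j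
    have h3 : Md (idx (k + 1)) (b k) < t (k + 1) := key2 k
    rw [hij] at h3
    omega
  -- strict ordering
  have hlt : ∀ j j' : Fin d, j.val < j'.val → g j x < g j' x := by
    intro j j' hjj
    obtain ⟨m, hm⟩ : ∃ m, j'.val = m + 1 := ⟨j'.val - 1, by omega⟩
    have h1 : g j x ≤ b j.val := hub j
    have h2 : b j.val ≤ b m := bmono (by omega)
    have h3 : b m < g j' x := hlb m j' hm
    omega
  -- pigeonhole
  have hc : ∀ j : Fin d, ∃ c : Fin (d - 1), g j x = G x c := fun j => hgmem j x
  choose c hcc using hc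
  have hcinj : Function.Injective c := by
    intro j j' hcjj
    by_contra hne
    have hvne : j.val ≠ j'.val := fun h => hne (Fin.ext h)
    have heq : g j x = g j' x := by rw [hcc j, hcc j', hcjj]
    rcases lt_or_gt_of_ne hvne with h | h
    · exact absurd heq (ne_of_lt (hlt j j' h))
    · exact absurd heq.symm (ne_of_lt (hlt j' j h))
  have := Fintype.card_le_of_injective c hcinj
  simp [Fintype.card_fin] at this
  omega
end
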